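/- arXiv:2405.17162 — 4 statements merged into one kernel-verified Lean document; each statement's English description precedes it below -/
import Mathlib

section
/- Define matrices C_m(a) ∈ M_2(C_∞) by C_m = 0 for m < 0, C_0 = I_2, and C_m = (A_1 C_{m-1}^{(1)} + A_2 C_{m-2}^{(2)})/(θ^{q^m} - θ) for m ≥ 1, where A_1 = (0,a;0,1) and A_2 = (1,0;0,0). Then for all m ≥ 0: the lower-left entry of C_m is 0, the lower-right entry equals the Carlitz coefficient c_m, and the upper-left entry equals c_{2,m} for m even and 0 for m odd, where c_{2,m} = 1/∏_{0≤i<m, i even}(θ^{q^m} - θ^{q^i}). -/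
/-- Define `C_m ∈ M_2(C_∞)` by `C_m = 0` for `m < 0`, `C_0 = I_2`, and
`C_m = (A_1 C_{m-1}^{(1)} + A_2 C_{m-2}^{(2)})/(θ^{q^m} - θ)` for `m ≥ 1`, where
`A_1 = (0,a;0,1)`, `A_2 = (1,0;0,0)`. Then for all `m ≥ 0`: the lower-left entry of `C_m`
is `0`, the lower-right entry is the Carlitz coefficient `c_m = (∏_{i<m}(θ^{q^m}-θ^{q^i}))⁻¹`,
and the upper-left entry is `c_{2,m} = (∏_{i<m, i even}(θ^{q^m}-θ^{q^i}))⁻¹` for `m` even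
and `0` for `m` odd. -/
theorem stmt_8 (p : ℕ) (hp : p.Prime) (nn : ℕ) (hnn : 0 < nn) (q : ℕ) (hq : q = p ^ nn)
    (K : Type*) [Field K] [CharP K p]
    (θ : K) (hne : ∀ i j : ℕ, i < j → θ ^ q ^ j ≠ θ ^ q ^ i)
    (a : K)
    (C : ℤ → Matrix (Fin 2) (Fin 2) K)
    (hCneg : ∀ m : ℤ, m < 0 → C m = 0)
    (hC0 : C 0 = 1)
    (hrec : ∀ m : ℤ, 1 ≤ m → C m = (θ ^ q ^ m.toNat - θ)⁻¹ •
      (!![0, a; 0, 1] * (C (m - 1)).map (· ^ q)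
        + !![1, 0; 0, 0] * (C (m - 2)).map (· ^ q ^ 2))) :
    ∀ m : ℕ,
      C (m : ℤ) 1 0 = 0 ∧
      C (m : ℤ) 1 1 = (∏ i ∈ Finset.range m, (θ ^ q ^ m - θ ^ q ^ i))⁻¹ ∧
      (Even m →
        C (m : ℤ) 0 0 = (∏ i ∈ (Finset.range m).filter (fun i => Even i),
          (θ ^ q ^ m - θ ^ q ^ i))⁻¹) ∧
      (¬ Even m → C (m : ℤ) 0 0 = 0) := by
  haveI : Fact p.Prime := ⟨hp⟩
  have hq0 : 0 < q := hq ▸ pow_pos hp.pos nn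
  have hfrob : ∀ x y : K, (x - y) ^ q = x ^ q - y ^ q := by
    intro x y; rw [hq]; exact sub_pow_char_pow x y nn
  have hq2 : q ^ 2 = p ^ (nn * 2) := by rw [hq, ← pow_mul]
  have hfrob2 : ∀ x y : K, (x - y) ^ q ^ 2 = x ^ q ^ 2 - y ^ q ^ 2 := by
    intro x y; rw [hq2]; exact sub_pow_char_pow x y (nn * 2)
  -- the filter of evens as an image
  have himg : ∀ n : ℕ, (Finset.range n).filter (fun i => Even i)
      = (Finset.range ((n + 1) / 2)).image (fun j => 2 * j) := by
    intro n
    ext x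
    simp only [Finset.mem_filter, Finset.mem_image, Finset.mem_range, Nat.even_iff]
    constructor
    · rintro ⟨hx, hr⟩
      exact ⟨x / 2, by omega, by omega⟩
    · rintro ⟨j, hj, hjx⟩
      constructor <;> omega
  have hinj : ∀ (s : Finset ℕ), Set.InjOn (fun j => 2 * j) s := by
    intro s x _ y _ h
    have h' : 2 * x = 2 * y := h
    omega
  -- rank 1 recursion for the coefficients
  have algA : ∀ k : ℕ,
      (θ ^ q ^ (k + 1) - θ)⁻¹ * ((∏ i ∈ Finset.range k, (θ ^ q ^ k - θ ^ q ^ i))⁻¹) ^ q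
        = (∏ i ∈ Finset.range (k + 1), (θ ^ q ^ (k + 1) - θ ^ q ^ i))⁻¹ := by
    intro k
    rw [Finset.prod_range_succ', inv_pow, ← mul_inv]
    congr 1
    rw [pow_zero, pow_one, mul_comm]
    congr 1
    rw [← Finset.prod_pow]
    refine Finset.prod_congr rfl fun i _ => ?_
    rw [hfrob, ← pow_mul, ← pow_mul, ← pow_succ, ← pow_succ]
  -- rank 2 recursion for the coefficients
  have algB : ∀ j : ℕ,
      (θ ^ q ^ (j + 2) - θ)⁻¹ *
        ((∏ i ∈ (Finset.range j).filter (fun i => Even i), (θ ^ q ^ j - θ ^ q ^ i))⁻¹) ^ q ^ 2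
        = (∏ i ∈ (Finset.range (j + 2)).filter (fun i => Even i),
            (θ ^ q ^ (j + 2) - θ ^ q ^ i))⁻¹ := by
    intro j
    rw [himg, himg, Finset.prod_image (hinj _), Finset.prod_image (hinj _)]
    have h32 : (j + 2 + 1) / 2 = (j + 1) / 2 + 1 := by omega
    rw [h32, Finset.prod_range_succ', inv_pow, ← mul_inv]
    congr 1
    rw [mul_zero, pow_zero, pow_one, mul_comm]
    congr 1
    rw [← Finset.prod_pow]
    refine Finset.prod_congr rfl fun i _ => ?_
    rw [hfrob2, ← pow_mul, ← pow_mul, ← pow_add, ← pow_add]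
    ring_nf
  -- entrywise recursion
  have hmat : ∀ k : ℕ,
      C ((k : ℤ) + 1) 1 0 = (θ ^ q ^ (k + 1) - θ)⁻¹ * (C (k : ℤ) 1 0) ^ q ∧
      C ((k : ℤ) + 1) 1 1 = (θ ^ q ^ (k + 1) - θ)⁻¹ * (C (k : ℤ) 1 1) ^ q ∧
      C ((k : ℤ) + 1) 0 0 = (θ ^ q ^ (k + 1) - θ)⁻¹ *
        (a * (C (k : ℤ) 1 0) ^ q + (C ((k : ℤ) - 1) 0 0) ^ q ^ 2) := by
    intro k
    have h1 : ((k : ℤ) + 1) - 1 = (k : ℤ) := by ring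
    have h2 : ((k : ℤ) + 1) - 2 = (k : ℤ) - 1 := by ring
    have ht : ((k : ℤ) + 1).toNat = k + 1 := by omega
    have hr := hrec ((k : ℤ) + 1) (by omega)
    rw [h1, h2, ht] at hr
    rw [hr]
    refine ⟨?_, ?_, ?_⟩ <;>
      · simp only [Matrix.smul_apply, Matrix.add_apply, Matrix.mul_apply, Fin.sum_univ_two,
          Matrix.map_apply, Fin.isValue, Matrix.of_apply, Matrix.cons_val', Matrix.cons_val_zero,
          Matrix.empty_val', Matrix.cons_val_fin_one, Matrix.cons_val_one, Matrix.head_fin_const,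
          Matrix.head_cons, smul_eq_mul]
        ring
  intro m
  induction m using Nat.strong_induction_on with
  | _ m ih =>
    match m with
    | 0 => simp [hC0, Matrix.one_apply]
    | (k + 1) =>
      obtain ⟨h10, h11, hev, hodd⟩ := ih k (by omega)
      obtain ⟨e10, e11, e00⟩ := hmat k
      have hc : ((k + 1 : ℕ) : ℤ) = (k : ℤ) + 1 := by push_cast; ring
      rw [hc]
      refine ⟨?_, ?_, ?_, ?_⟩
      · rw [e10, h10, zero_pow hq0.ne', mul_zero]
      · rw [e11, h11, algA]
      · intro hEv
        have hk : ¬ Even k := by simpa [Nat.even_add_one] using hEv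
        have hkpos : k ≠ 0 := by rintro rfl; exact hk Even.zero
        obtain ⟨j, rfl⟩ : ∃ j, k = j + 1 := ⟨k - 1, by omega⟩
        have hjEv : Even j := by rwa [Nat.even_add_one, not_not] at hk
        have hj := (ih j (by omega)).2.2.1 hjEv
        have hcast : ((j + 1 : ℕ) : ℤ) - 1 = (j : ℤ) := by push_cast; ring
        rw [e00, h10, hcast, hj, zero_pow hq0.ne', mul_zero, zero_add]
        have := algB j
        have hjj : j + 1 + 1 = j + 2 := by ring
        rw [hjj]
        exact this
      · intro hEv
        have hk : Even k := by rwa [Nat.even_add_one, not_not] at hEv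
        have hz : C ((k : ℤ) - 1) 0 0 = 0 := by
          rcases Nat.eq_zero_or_pos k with h | h
          · subst h; rw [hCneg _ (by norm_num)]; simp
          · obtain ⟨j, rfl⟩ : ∃ j, k = j + 1 := ⟨k - 1, by omega⟩
            have hjodd : ¬ Even j := Nat.even_add_one.mp hk
            have hcast : ((j + 1 : ℕ) : ℤ) - 1 = (j : ℤ) := by push_cast; ring
            rw [hcast]
            exact (ih j (by omega)).2.2.2 hjodd
        rw [e00, h10, hz, zero_pow hq0.ne', mul_zero, zero_add,
          zero_pow (pow_ne_zero 2 hq0.ne'), mul_zero]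
end

section
/- For every a ∈ C_∞ the series D(a) := Σ_{m≥1} d_m(a) π_2^{q^m} converges in C_∞; that is, v_∞(d_m(a)·π_2^{q^m}) → ∞ as m → ∞. -/
/-- For every `a ∈ C_∞` the series `D(a) = Σ_{m≥1} d_m(a) π_2^{q^m}`
converges in `C_∞`; that is, `v_∞(d_m(a)·π_2^{q^m}) → ∞` as `m → ∞`, i.e.
`‖d_m(a)·π_2^{q^m}‖ → 0` for the absolute value `‖x‖ = q^{-v_∞(x)}` (so `‖θ‖ = q`,
`‖π_2‖ = q^{q²/(q²-1)}`), whence the series is summable. -/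
theorem stmt_12 (p : ℕ) (hp : p.Prime) (nn : ℕ) (hnn : 0 < nn) (q : ℕ) (hq : q = p ^ nn)
    (K : Type*) [NormedField K] [CompleteSpace K] [CharP K p]
    (hna : ∀ x y : K, ‖x + y‖ ≤ max ‖x‖ ‖y‖)
    (θ : K) (hθ : ‖θ‖ = q)
    (π2 : K) (hπ2 : ‖π2‖ = (q : ℝ) ^ ((q : ℝ) ^ 2 / ((q : ℝ) ^ 2 - 1)))
    (a : K)
    (c2 : ℕ → K)
    (hc2 : ∀ m : ℕ, c2 m = (∏ i ∈ (Finset.range m).filter (fun i => Even i),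
      (θ ^ q ^ m - θ ^ q ^ i))⁻¹)
    (d : ℕ → K) (hd0 : d 0 = 0)
    (hdeven : ∀ m : ℕ, 1 ≤ m → Even m → d m = d (m - 1) ^ q / (θ ^ q ^ m - θ))
    (hdodd : ∀ m : ℕ, ¬ Even m → d m = (a * c2 (m - 1) ^ q + d (m - 1) ^ q) / (θ ^ q ^ m - θ)) :
    Summable (fun m => d m * π2 ^ q ^ m) ∧
    Filter.Tendsto (fun m => ‖d m * π2 ^ q ^ m‖) Filter.atTop (nhds 0) := by
  -- basic numerical facts
  have hq2 : 2 ≤ q := by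
    subst hq
    calc 2 ≤ p := hp.two_le
    _ ≤ p ^ nn := Nat.le_self_pow hnn.ne' p
  have hq1 : 1 < q := hq2
  set N : ℝ := (q : ℝ) with hNdef
  have hN2 : (2 : ℝ) ≤ N := by rw [hNdef]; exact_mod_cast hq2
  have hN1 : (1 : ℝ) < N := by linarith
  have hN0 : (0 : ℝ) < N := by linarith
  set B : ℝ := max ‖a‖ 1 with hBdef
  have hB1 : (1 : ℝ) ≤ B := le_max_right _ _
  have hB0 : (0 : ℝ) ≤ B := by linarith
  have hBa : ‖a‖ ≤ B := le_max_left _ _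
  -- ultrametric: strict max determines the norm of a difference
  have hsub : ∀ x y : K, ‖y‖ < ‖x‖ → ‖x - y‖ = ‖x‖ := by
    intro x y hxy
    apply le_antisymm
    · have h := hna x (-y)
      rw [← sub_eq_add_neg, norm_neg, max_eq_left hxy.le] at h
      exact h
    · have h := hna (x - y) y
      rw [sub_add_cancel] at h
      rcases max_cases ‖x - y‖ ‖y‖ with ⟨h1, _⟩ | ⟨h1, _⟩
      · rw [h1] at h; exact h
      · rw [h1] at h; exact absurd h (not_le.mpr hxy)
  -- norms of the key differences
  have hfac : ∀ m i : ℕ, i < m → ‖θ ^ q ^ m - θ ^ q ^ i‖ = N ^ q ^ m := by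
    intro m i him
    have h1 : ‖θ ^ q ^ i‖ < ‖θ ^ q ^ m‖ := by
      rw [norm_pow, norm_pow, hθ]
      exact pow_lt_pow_right₀ hN1 (Nat.pow_lt_pow_right hq1 him)
    rw [hsub _ _ h1, norm_pow, hθ]
  have hden : ∀ m : ℕ, 0 < m → ‖θ ^ q ^ m - θ‖ = N ^ q ^ m := by
    intro m hm
    have h := hfac m 0 hm
    simpa using h
  -- number of even indices below n
  have hcard : ∀ n : ℕ, ((Finset.range n).filter (fun i => Even i)).card = (n + 1) / 2 := by
    intro n
    induction n with
    | zero => simp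
    | succ k ih =>
      rw [Finset.range_add_one, Finset.filter_insert]
      by_cases hk : Even k
      · rw [if_pos hk, Finset.card_insert_of_notMem (by simp), ih]
        rw [Nat.even_iff] at hk; omega
      · rw [if_neg hk, ih]
        rw [Nat.even_iff] at hk; omega
  -- the norm of c2 n
  have hc2norm : ∀ n : ℕ, ‖c2 n‖ = (N ^ (q ^ n * ((n + 1) / 2)))⁻¹ := by
    intro n
    rw [hc2 n, norm_inv]
    congr 1
    rw [norm_prod]
    rw [Finset.prod_congr rfl (fun i hi => hfac n i
      (Finset.mem_range.mp (Finset.mem_filter.mp hi).1)), Finset.prod_const, hcard n, ← pow_mul]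
  -- the key inductive estimate
  have Pm : ∀ m : ℕ, ‖d m‖ * N ^ (q ^ m * ((m + 1) / 2)) ≤ B ^ q ^ m := by
    intro m
    induction m with
    | zero => simpa [hd0] using hB0
    | succ n ih =>
      have hNQpos : (0 : ℝ) < N ^ q ^ (n + 1) := pow_pos hN0 _
      -- common estimate for the `d n ^ q` contribution
      have hd2 : ‖d n‖ ^ q * N ^ (q ^ (n + 1) * ((n + 2) / 2))
          ≤ B ^ q ^ (n + 1) * N ^ q ^ (n + 1) := by
        have e1 : q ^ (n + 1) * ((n + 2) / 2) ≤ q ^ n * ((n + 1) / 2) * q + q ^ (n + 1) := by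
          rw [pow_succ]
          calc q ^ n * q * ((n + 2) / 2) ≤ q ^ n * q * ((n + 1) / 2 + 1) :=
            Nat.mul_le_mul_left _ (by omega)
          _ = q ^ n * ((n + 1) / 2) * q + q ^ n * q := by ring
        calc ‖d n‖ ^ q * N ^ (q ^ (n + 1) * ((n + 2) / 2))
            ≤ ‖d n‖ ^ q * (N ^ (q ^ n * ((n + 1) / 2) * q) * N ^ q ^ (n + 1)) := by
              apply mul_le_mul_of_nonneg_left _ (pow_nonneg (norm_nonneg _) q)
              rw [← pow_add]
              exact pow_le_pow_right₀ hN1.le e1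
          _ = (‖d n‖ * N ^ (q ^ n * ((n + 1) / 2))) ^ q * N ^ q ^ (n + 1) := by
              rw [mul_pow, pow_mul]; ring
          _ ≤ (B ^ q ^ n) ^ q * N ^ q ^ (n + 1) := by
              apply mul_le_mul_of_nonneg_right _ hNQpos.le
              exact pow_le_pow_left₀ (mul_nonneg (norm_nonneg _) (pow_nonneg hN0.le _)) ih q
          _ = B ^ q ^ (n + 1) * N ^ q ^ (n + 1) := by rw [← pow_mul, ← pow_succ]
      rcases Nat.even_or_odd (n + 1) with he | ho
      · -- even step
        have hdm := hdeven (n + 1) (Nat.succ_le_succ (Nat.zero_le n)) he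
        simp only [Nat.add_sub_cancel] at hdm
        rw [hdm, norm_div, norm_pow, hden (n + 1) (Nat.succ_pos n),
          div_mul_eq_mul_div, div_le_iff₀ hNQpos]
        exact hd2
      · -- odd step
        have hdm := hdodd (n + 1) (Nat.not_even_iff_odd.mpr ho)
        simp only [Nat.add_sub_cancel] at hdm
        rw [hdm, norm_div, hden (n + 1) (Nat.succ_pos n),
          div_mul_eq_mul_div, div_le_iff₀ hNQpos]
        have hnum : ‖a * c2 n ^ q + d n ^ q‖ ≤ max (‖a‖ * ‖c2 n‖ ^ q) (‖d n‖ ^ q) := by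
          simpa [norm_mul, norm_pow] using hna (a * c2 n ^ q) (d n ^ q)
        have hNE : (0 : ℝ) ≤ N ^ (q ^ (n + 1) * ((n + 2) / 2)) := (pow_pos hN0 _).le
        refine le_trans (mul_le_mul_of_nonneg_right hnum hNE) ?_
        rw [max_mul_of_nonneg _ _ hNE]
        refine max_le ?_ hd2
        -- the `a * c2 n ^ q` contribution
        have hneven : Even n := by
          rw [Nat.odd_iff] at ho
          rw [Nat.even_iff]
          omega
        have h2 : (n + 2) / 2 = (n + 1) / 2 + 1 := by
          rw [Nat.even_iff] at hneven; omega
        have hc2n : ‖c2 n‖ * N ^ (q ^ n * ((n + 1) / 2)) = 1 := by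
          rw [hc2norm n]
          exact inv_mul_cancel₀ (ne_of_gt (pow_pos hN0 _))
        calc ‖a‖ * ‖c2 n‖ ^ q * N ^ (q ^ (n + 1) * ((n + 2) / 2))
            = ‖a‖ * (‖c2 n‖ * N ^ (q ^ n * ((n + 1) / 2))) ^ q * N ^ q ^ (n + 1) := by
              rw [h2, Nat.mul_add, mul_one, pow_add, pow_succ, mul_pow, pow_mul]
              ring
          _ = ‖a‖ * N ^ q ^ (n + 1) := by rw [hc2n, one_pow, mul_one]
          _ ≤ B ^ q ^ (n + 1) * N ^ q ^ (n + 1) := by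
              apply mul_le_mul_of_nonneg_right _ hNQpos.le
              exact hBa.trans (le_self_pow₀ hB1 (pow_ne_zero _ (by omega)))
  -- bound the norm of π2
  have hπle : ‖π2‖ ≤ N ^ (2 : ℕ) := by
    have hv : (q : ℝ) ^ 2 / ((q : ℝ) ^ 2 - 1) ≤ 2 := by
      rw [div_le_iff₀ (by nlinarith)]
      nlinarith
    calc ‖π2‖ = N ^ ((q : ℝ) ^ 2 / ((q : ℝ) ^ 2 - 1)) := hπ2
      _ ≤ N ^ (2 : ℝ) := Real.rpow_le_rpow_of_exponent_le hN1.le hv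
      _ = N ^ (2 : ℕ) := by
          rw [show (2 : ℝ) = ((2 : ℕ) : ℝ) by norm_num, Real.rpow_natCast]
  -- choose the cutoff
  obtain ⟨n0, hn0⟩ := pow_unbounded_of_one_lt (2 * B) (one_lt_two : (1 : ℝ) < 2)
  have hn0' : 2 * B < N ^ n0 := hn0.trans_le (pow_le_pow_left₀ (by norm_num) hN2 n0)
  have hhalf : B / N ^ n0 ≤ 1 / 2 := by
    rw [div_le_div_iff₀ (pow_pos hN0 n0) (by norm_num : (0 : ℝ) < 2)]
    linarith
  -- the eventual geometric bound
  have hbound : ∀ m : ℕ, 2 * n0 + 4 ≤ m → ‖d m * π2 ^ q ^ m‖ ≤ (1 / 2 : ℝ) ^ m := by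
    intro m hm
    have hj : n0 + 2 ≤ (m + 1) / 2 := by omega
    have hπ' : ‖π2‖ ^ q ^ m ≤ (N ^ (2 : ℕ)) ^ q ^ m :=
      pow_le_pow_left₀ (norm_nonneg _) hπle _
    have step : ‖d m‖ * ((N ^ n0) ^ q ^ m * (N ^ (2 : ℕ)) ^ q ^ m) ≤ B ^ q ^ m := by
      refine le_trans ?_ (Pm m)
      apply mul_le_mul_of_nonneg_left _ (norm_nonneg _)
      rw [← pow_mul, ← pow_mul, ← pow_add]
      apply pow_le_pow_right₀ hN1.le
      calc n0 * q ^ m + 2 * q ^ m = q ^ m * (n0 + 2) := by ring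
        _ ≤ q ^ m * ((m + 1) / 2) := Nat.mul_le_mul_left _ hj
    have h3 : ‖d m‖ * ‖π2‖ ^ q ^ m * (N ^ n0) ^ q ^ m ≤ B ^ q ^ m := by
      calc ‖d m‖ * ‖π2‖ ^ q ^ m * (N ^ n0) ^ q ^ m
          ≤ ‖d m‖ * (N ^ (2 : ℕ)) ^ q ^ m * (N ^ n0) ^ q ^ m := by
            apply mul_le_mul_of_nonneg_right
              (mul_le_mul_of_nonneg_left hπ' (norm_nonneg _))
              (pow_nonneg (pow_nonneg hN0.le _) _)
        _ = ‖d m‖ * ((N ^ n0) ^ q ^ m * (N ^ (2 : ℕ)) ^ q ^ m) := by ring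
        _ ≤ B ^ q ^ m := step
    have h4 : ‖d m‖ * ‖π2‖ ^ q ^ m ≤ (B / N ^ n0) ^ q ^ m := by
      rw [div_pow, le_div_iff₀ (pow_pos (pow_pos hN0 _) _)]
      exact h3
    calc ‖d m * π2 ^ q ^ m‖ = ‖d m‖ * ‖π2‖ ^ q ^ m := by rw [norm_mul, norm_pow]
      _ ≤ (B / N ^ n0) ^ q ^ m := h4
      _ ≤ (1 / 2 : ℝ) ^ q ^ m :=
          pow_le_pow_left₀ (div_nonneg hB0 (pow_nonneg hN0.le _)) hhalf _
      _ ≤ (1 / 2 : ℝ) ^ m :=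
          pow_le_pow_of_le_one (by norm_num) (by norm_num) (Nat.lt_pow_self (n := m) hq1).le
  -- summability of the norms, hence of the series
  have hsumnorm : Summable (fun m => ‖d m * π2 ^ q ^ m‖) := by
    refine (summable_nat_add_iff (2 * n0 + 4)).mp ?_
    apply Summable.of_nonneg_of_le (fun n => norm_nonneg _)
      (fun n => hbound (n + (2 * n0 + 4)) (by omega))
    simp_rw [pow_add]
    exact summable_geometric_two.mul_right _
  have hsum : Summable (fun m => d m * π2 ^ q ^ m) := Summable.of_norm hsumnorm
  refine ⟨hsum, ?_⟩
  have ht := hsum.tendsto_atTop_zero.norm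
  simpa using ht
end

section
/- Suppose X_1, X_2, X_3 are formal series over C_∞ (with Frobenius twists X^{(k)} defined coefficientwise) satisfying: X_3 = X_1^{(1)}; (T-θ)X_2 - a_{21}X_3 = X_2^{(1)}; and (T-θ)X_1 - a_{12}(T-θ)X_2 - dX_3 = X_3^{(1)}, where d = a_{11} - a_{12}a_{21} and a_{21} ≠ 0. Then X_2 satisfies the single equation (1/a_{21}^{q^2})X_2^{(3)} + (-T/a_{21}^{q^2} + d^q/a_{21}^q + θ^{q^2}/a_{21}^{q^2})X_2^{(2)} - (T-θ^q)(1/a_{21} + a_{12}^q + d^q/a_{21}^q)X_2^{(1)} + ((T-θ^q)(T-θ)/a_{21})X_2 = 0. -/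
/-- The Frobenius twist `X^{(k)}` of a formal power series over `C_∞`: all coefficients
are raised to the `q^k`-th power. -/
noncomputable def tw (q k : ℕ) {K : Type*} [Field K] (X : PowerSeries K) : PowerSeries K :=
  PowerSeries.mk fun i => (PowerSeries.coeff i X) ^ q ^ k

section aux
variable {p nn q : ℕ} {K : Type*} [Field K]

lemma tw_tw (hq : q = p ^ nn) (j k : ℕ) (A : PowerSeries K) :
    tw q j (tw q k A) = tw q (j + k) A := by
  ext i
  simp [tw, ← pow_mul, ← pow_add, Nat.add_comm j k]

variable (hp : p.Prime) (hnn : 0 < nn) (hq : q = p ^ nn) [CharP K p]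
include hp hq

lemma tw_one_sub (A B : PowerSeries K) : tw q 1 (A - B) = tw q 1 A - tw q 1 B := by
  haveI := Fact.mk hp
  ext i
  subst hq
  simp [tw, pow_one, sub_pow_char_pow]

lemma tw_one_C_mul (a : K) (A : PowerSeries K) :
    tw q 1 (PowerSeries.C a * A) = PowerSeries.C (a ^ q) * tw q 1 A := by
  ext i
  simp only [tw, PowerSeries.coeff_mk, PowerSeries.coeff_C_mul, pow_one]
  exact mul_pow _ _ _

lemma tw_one_X_mul (A : PowerSeries K) :
    tw q 1 (PowerSeries.X * A) = PowerSeries.X * tw q 1 A := by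
  have hq0 : q ≠ 0 := by subst hq; exact pow_ne_zero _ hp.ne_zero
  ext i
  cases i with
  | zero => simp [tw, zero_pow hq0]
  | succ n => simp [tw, PowerSeries.coeff_succ_X_mul]

lemma tw_one_shift (θ : K) (A : PowerSeries K) :
    tw q 1 ((PowerSeries.X - PowerSeries.C θ) * A)
      = (PowerSeries.X - PowerSeries.C (θ ^ q)) * tw q 1 A := by
  rw [sub_mul, sub_mul, tw_one_sub hp hq, tw_one_X_mul hp hq, tw_one_C_mul hp hq]

end aux

/-- If formal series `X_1, X_2, X_3` over `C_∞` satisfy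
`X_3 = X_1^{(1)}`, `(T-θ)X_2 - a_{21}X_3 = X_2^{(1)}`, and
`(T-θ)X_1 - a_{12}(T-θ)X_2 - dX_3 = X_3^{(1)}` with `d = a_{11} - a_{12}a_{21}`, `a_{21} ≠ 0`,
then `X_2` satisfies
`(1/a_{21}^{q²})X_2^{(3)} + (-T/a_{21}^{q²} + d^q/a_{21}^q + θ^{q²}/a_{21}^{q²})X_2^{(2)}
 - (T-θ^q)(1/a_{21} + a_{12}^q + d^q/a_{21}^q)X_2^{(1)} + ((T-θ^q)(T-θ)/a_{21})X_2 = 0`. -/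
theorem stmt_15 (p : ℕ) (hp : p.Prime) (nn : ℕ) (hnn : 0 < nn) (q : ℕ) (hq : q = p ^ nn)
    (K : Type*) [Field K] [CharP K p]
    (θ a11 a12 a21 : K) (ha21 : a21 ≠ 0)
    (X1 X2 X3 : PowerSeries K)
    (h1 : X3 = tw q 1 X1)
    (h2 : (PowerSeries.X - PowerSeries.C θ) * X2 - PowerSeries.C a21 * X3 = tw q 1 X2)
    (h3 : (PowerSeries.X - PowerSeries.C θ) * X1
        - PowerSeries.C a12 * (PowerSeries.X - PowerSeries.C θ) * X2
        - PowerSeries.C (a11 - a12 * a21) * X3 = tw q 1 X3) :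
    PowerSeries.C (a21 ^ q ^ 2)⁻¹ * tw q 3 X2
      + (PowerSeries.C ((a11 - a12 * a21) ^ q / a21 ^ q + θ ^ q ^ 2 / a21 ^ q ^ 2)
          - PowerSeries.C (a21 ^ q ^ 2)⁻¹ * PowerSeries.X) * tw q 2 X2
      - (PowerSeries.X - PowerSeries.C (θ ^ q))
          * PowerSeries.C (1 / a21 + a12 ^ q + (a11 - a12 * a21) ^ q / a21 ^ q)
          * tw q 1 X2
      + (PowerSeries.X - PowerSeries.C (θ ^ q)) * (PowerSeries.X - PowerSeries.C θ)
          * PowerSeries.C a21⁻¹ * X2 = 0 := by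
  set A := PowerSeries.X - PowerSeries.C θ with hA
  set d := a11 - a12 * a21 with hd
  -- X3 in terms of X2
  have hX3 : X3 = PowerSeries.C a21⁻¹ * (A * X2 - tw q 1 X2) := by
    have e : PowerSeries.C a21 * X3 = A * X2 - tw q 1 X2 := by linear_combination -h2
    calc X3 = (PowerSeries.C a21⁻¹ * PowerSeries.C a21) * X3 := by
            rw [← map_mul, inv_mul_cancel₀ ha21, map_one, one_mul]
      _ = PowerSeries.C a21⁻¹ * (A * X2 - tw q 1 X2) := by rw [mul_assoc, e]
  -- tw 1 X3
  have h13 : tw q 1 X3 = PowerSeries.C ((a21⁻¹) ^ q) *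
      ((PowerSeries.X - PowerSeries.C (θ ^ q)) * tw q 1 X2 - tw q 2 X2) := by
    rw [hX3, tw_one_C_mul hp hq, tw_one_sub hp hq, tw_one_shift hp hq,
      tw_tw hq 1 1]
  -- tw 2 X3
  have h23 : tw q 2 X3 = PowerSeries.C ((a21⁻¹) ^ q ^ 2) *
      ((PowerSeries.X - PowerSeries.C (θ ^ q ^ 2)) * tw q 2 X2 - tw q 3 X2) := by
    have : tw q 2 X3 = tw q 1 (tw q 1 X3) := (tw_tw hq 1 1 X3).symm
    rw [this, h13, tw_one_C_mul hp hq, tw_one_sub hp hq, tw_one_shift hp hq,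
      tw_tw hq 1 1, tw_tw hq 1 2, ← pow_mul, ← pow_mul, ← pow_two]
  -- twist h3
  have h33 : (PowerSeries.X - PowerSeries.C (θ ^ q)) * X3
      - PowerSeries.C (a12 ^ q) * ((PowerSeries.X - PowerSeries.C (θ ^ q)) * tw q 1 X2)
      - PowerSeries.C (d ^ q) * tw q 1 X3 = tw q 2 X3 := by
    have e := congrArg (tw q 1) h3
    rw [mul_assoc, tw_one_sub hp hq, tw_one_sub hp hq, tw_one_shift hp hq,
      tw_one_C_mul hp hq, tw_one_C_mul hp hq, tw_one_shift hp hq,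
      tw_tw hq 1 1, ← h1] at e
    exact e
  rw [h13, h23, hX3] at h33
  -- rewrite goal constants
  have c1 : (a21 ^ q ^ 2)⁻¹ = (a21⁻¹) ^ q ^ 2 := (inv_pow a21 (q ^ 2)).symm
  have c2 : d ^ q / a21 ^ q + θ ^ q ^ 2 / a21 ^ q ^ 2
      = d ^ q * (a21⁻¹) ^ q + θ ^ q ^ 2 * (a21⁻¹) ^ q ^ 2 := by
    rw [div_eq_mul_inv, div_eq_mul_inv, inv_pow, inv_pow]
  have c3 : 1 / a21 + a12 ^ q + d ^ q / a21 ^ q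
      = a21⁻¹ + a12 ^ q + d ^ q * (a21⁻¹) ^ q := by
    rw [one_div, div_eq_mul_inv, inv_pow]
  rw [c1, c2, c3]
  simp only [map_add, map_mul]
  linear_combination h33
end

section
/- Suppose matrices X_m ∈ M_2(C_∞) for m ∈ Z (zero outside 0 ≤ m ≤ k) satisfy for all m: θX_m + AX_{m-1}^{(1)} + EX_{m-2}^{(2)} = θ^{q^m}X_m + X_{m-1}B_{m-1} + X_{m-2}E, where A = (0,a;0,1), E = (1,0;0,0), and each B_{m-1} is upper triangular of the form (0,*;0,1). Then the lower-left entry of X_m vanishes for every m. -/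
/-- Suppose `X_m ∈ M_2(C_∞)` for `m ∈ ℤ` (zero outside `0 ≤ m ≤ k`)
satisfy, for all `m`,
`θ X_m + A X_{m-1}^{(1)} + E X_{m-2}^{(2)} = θ^{q^m} X_m + X_{m-1} B_{m-1} + X_{m-2} E`,
where `A = (0,a;0,1)`, `E = (1,0;0,0)`, and each `B_{m-1}` is upper triangular of the
form `(0,*;0,1)`. Then the lower-left entry of `X_m` vanishes for every `m`. -/
theorem stmt_18 (q : ℕ) (hq : 2 ≤ q)
    (K : Type*) [Field K]
    (θ a : K) (k : ℕ)
    (X : ℤ → Matrix (Fin 2) (Fin 2) K)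
    (hsupp : ∀ m : ℤ, (m < 0 ∨ (k : ℤ) < m) → X m = 0)
    (B : ℤ → Matrix (Fin 2) (Fin 2) K)
    (hB : ∀ m : ℤ, B m 0 0 = 0 ∧ B m 1 0 = 0 ∧ B m 1 1 = 1)
    (heq : ∀ m : ℤ,
      θ • X m + !![0, a; 0, 1] * (X (m - 1)).map (· ^ q)
        + !![1, 0; 0, 0] * (X (m - 2)).map (· ^ q ^ 2)
      = θ ^ q ^ m.toNat • X m + X (m - 1) * B (m - 1) + X (m - 2) * !![1, 0; 0, 0]) :
    ∀ m : ℤ, X m 1 0 = 0 := by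
  -- Scalar recurrence from the (1,0) entry
  have key : ∀ m : ℤ, X (m - 2) 1 0
      = θ * X m 1 0 + (X (m - 1) 1 0) ^ q - θ ^ q ^ m.toNat * X m 1 0 := by
    intro m
    have h10 := congrFun (congrFun (heq m) 1) 0
    obtain ⟨hb0, hb1, _⟩ := hB (m - 1)
    simp [Matrix.add_apply, Matrix.mul_apply, Matrix.smul_apply, smul_eq_mul,
      Fin.sum_univ_two, Matrix.map_apply, Matrix.vecMul, dotProduct, hb0, hb1] at h10
    linear_combination -h10
  have main : ∀ n : ℕ, ∀ m : ℤ, (k : ℤ) + 1 - n ≤ m → X m 1 0 = 0 := by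
    intro n
    induction n with
    | zero =>
      intro m hm
      have := hsupp m (Or.inr (by omega))
      simp [this]
    | succ n ih =>
      intro m hm
      rcases lt_or_ge m ((k : ℤ) + 1 - n) with h | h
      · have h1 : X (m + 2) 1 0 = 0 := ih _ (by omega)
        have h2 : X (m + 1) 1 0 = 0 := ih _ (by omega)
        have := key (m + 2)
        rw [show m + 2 - 2 = m by ring, show m + 2 - 1 = m + 1 by ring] at this
        rw [this, h1, h2]
        simp [zero_pow (by omega : q ≠ 0)]
      · exact ih m h
  intro m
  exact main ((k : ℤ) + 1 - m).toNat m (by omega)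
end
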